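/- arXiv:1507.01089 — 2 statements merged into one kernel-verified Lean document; each statement's English description precedes it below -/
import Mathlib

section
/- The φ-shuffle product ⧢_φ on K⟨Y⟩ is associative if and only if the map φ : KY ⊗ KY → KY is associative, and ⧢_φ is commutative if and only if φ is commutative. -/
noncomputable section

open Finsupp

variable {K : Type*} [CommRing K] [Algebra ℚ K]
variable {Y : Type*} [DecidableEq Y]

/-- The word `w ∈ Y*` viewed as a basis element of `K⟨Y⟩`. -/
def word (w : List Y) : List Y →₀ K := Finsupp.single w 1

/-- Left concatenation by a letter, as a linear endomorphism of `K⟨Y⟩`. -/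
def consL (a : Y) : (List Y →₀ K) →ₗ[K] (List Y →₀ K) :=
  Finsupp.lmapDomain K K (List.cons a)

/-- `m` is the `φ`-deformed shuffle product: it satisfies the initialization
`1 ⧢ w = w ⧢ 1 = w` and the recursion
`(au) ⧢ (bv) = a (u ⧢ bv) + b (au ⧢ v) + φ(a,b)(u ⧢ v)`. -/
def IsPhiShuffle (φ : Y → Y → (Y →₀ K))
    (m : (List Y →₀ K) →ₗ[K] (List Y →₀ K) →ₗ[K] (List Y →₀ K)) : Prop :=
  (∀ w : List Y, m (word []) (word w) = word w) ∧
  (∀ w : List Y, m (word w) (word []) = word w) ∧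
  ∀ (a b : Y) (u v : List Y),
    m (word (a :: u)) (word (b :: v)) =
      consL a (m (word u) (word (b :: v))) + consL b (m (word (a :: u)) (word v)) +
      (φ a b).sum fun c k => k • consL c (m (word u) (word v))

/-- Bilinear extension of `φ` to `KY`. -/
def phiExt (φ : Y → Y → (Y →₀ K)) (p q : Y →₀ K) : Y →₀ K :=
  p.sum fun a ka => q.sum fun b kb => (ka * kb) • φ a b

/-- The extension of `φ` to `KY ⊗ KY → KY` is associative. -/
def PhiAssoc (φ : Y → Y → (Y →₀ K)) : Prop :=
  ∀ a b c : Y, phiExt φ (φ a b) (Finsupp.single c 1) = phiExt φ (Finsupp.single a 1) (φ b c)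

/-- The extension of `φ` is commutative. -/
def PhiComm (φ : Y → Y → (Y →₀ K)) : Prop := ∀ a b : Y, φ a b = φ b a

/-- `φ` is dualizable: for every letter `z` only finitely many pairs of letters
have `z` in the support of their `φ`-product. -/
def PhiDualizable (φ : Y → Y → (Y →₀ K)) : Prop :=
  ∀ z : Y, {p : Y × Y | φ p.1 p.2 z ≠ 0}.Finite

/-- Extension of an associative `φ` to nonempty words: `φ(xw) = φ(x, φ(w))`. -/
def phiWord (φ : Y → Y → (Y →₀ K)) : List Y → (Y →₀ K)
  | [] => 0
  | [x] => Finsupp.single x 1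
  | x :: y :: w => (phiWord φ (y :: w)).sum fun b k => k • φ x b

/-- `φ` is moderate: for every letter `y`, only finitely many nonempty words `w`
satisfy `⟨y, φ(w)⟩ ≠ 0`. -/
def PhiModerate (φ : Y → Y → (Y →₀ K)) : Prop :=
  ∀ y : Y, {w : List Y | w ≠ [] ∧ phiWord φ w y ≠ 0}.Finite

/-- Pairing of two polynomials (the words form an orthonormal basis). -/
def pairPP (p q : List Y →₀ K) : K := p.sum fun w a => a * q w

/-- Pairing `⟨S, p⟩` of a series with a polynomial. -/
def pairPS (S : List Y → K) (p : List Y →₀ K) : K := p.sum fun w a => a * S w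

/-- Concatenation product on `K⟨Y⟩`. -/
def concP (p q : List Y →₀ K) : List Y →₀ K :=
  p.sum fun u a => q.sum fun v b => Finsupp.single (u ++ v) (a * b)

/-- Concatenation powers. -/
def concPow (p : List Y →₀ K) : ℕ → (List Y →₀ K)
  | 0 => word []
  | n + 1 => concP p (concPow p n)

/-- Powers with respect to a bilinear product `m`. -/
def mpow (m : (List Y →₀ K) →ₗ[K] (List Y →₀ K) →ₗ[K] (List Y →₀ K))
    (p : List Y →₀ K) : ℕ → (List Y →₀ K)
  | 0 => word []
  | n + 1 => m p (mpow m p n)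

/-- `m`-product of a list of polynomials. -/
def prodM (m : (List Y →₀ K) →ₗ[K] (List Y →₀ K) →ₗ[K] (List Y →₀ K))
    (L : List (List Y →₀ K)) : List Y →₀ K :=
  L.foldr (fun p acc => m p acc) (word [])

/-- The unit series. -/
def oneS : List Y → K := fun w => if w = [] then 1 else 0

/-- Concatenation (Cauchy) product of series. -/
def mulS (S T : List Y → K) : List Y → K := fun w =>
  ∑ i ∈ Finset.range (w.length + 1), S (w.take i) * T (w.drop i)

/-- Concatenation powers of a series. -/
def powS (S : List Y → K) : ℕ → (List Y → K)
  | 0 => oneS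
  | n + 1 => mulS S (powS S n)

/-- Concatenation product of a list of series. -/
def prodS (L : List (List Y → K)) : List Y → K := L.foldr (fun S acc => mulS S acc) oneS

/-- The coproduct `Δ_{⧢_φ}` dual to `m`, on series: `Δ(S)(u,v) = ⟨S, u ⧢_φ v⟩`. -/
def DeltaS (m : (List Y →₀ K) →ₗ[K] (List Y →₀ K) →ₗ[K] (List Y →₀ K))
    (S : List Y → K) : List Y × List Y → K :=
  fun p => pairPS S (m (word p.1) (word p.2))

/-- `S` is primitive: `Δ_{⧢_φ}(S) = S ⊗ 1 + 1 ⊗ S`. -/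
def PrimS (m : (List Y →₀ K) →ₗ[K] (List Y →₀ K) →ₗ[K] (List Y →₀ K))
    (S : List Y → K) : Prop :=
  ∀ u v : List Y, DeltaS m S (u, v) =
    (if v = [] then S u else 0) + (if u = [] then S v else 0)

/-- `S` is group-like: `⟨S,1⟩ = 1` and `Δ_{⧢_φ}(S) = S ⊗ S`. -/
def GroupLikeS (m : (List Y →₀ K) →ₗ[K] (List Y →₀ K) →ₗ[K] (List Y →₀ K))
    (S : List Y → K) : Prop :=
  S [] = 1 ∧ ∀ u v : List Y, DeltaS m S (u, v) = S u * S v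

/-- `Δfn` is the (finitely supported) dual coproduct witnessing dualizability of `m`:
`⟨u ⧢_φ v, w⟩ = ⟨u ⊗ v, Δ(w)⟩`. -/
def IsDualWitness (m : (List Y →₀ K) →ₗ[K] (List Y →₀ K) →ₗ[K] (List Y →₀ K))
    (Δfn : List Y → (List Y × List Y →₀ K)) : Prop :=
  ∀ u v w : List Y, (m (word u) (word v)) w = Δfn w (u, v)

/-- All factorizations of a word into nonempty blocks. -/
def cuts : List Y → List (List (List Y))
  | [] => [[]]
  | a :: w =>
    (cuts w).flatMap fun parts =>
      match parts with
      | [] => [[[a]]]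
      | p :: ps => [[a] :: p :: ps, (a :: p) :: ps]

/-- The extended Eulerian projector `π₁` on series:
`π₁(S) = Σ_{k≥1} ((-1)^{k-1}/k) Σ_{u_1⋯u_k = w, u_i ∈ Y⁺} ⟨S, u_1 ⧢_φ ⋯ ⧢_φ u_k⟩ w`. -/
def piOneS (m : (List Y →₀ K) →ₗ[K] (List Y →₀ K) →ₗ[K] (List Y →₀ K))
    (S : List Y → K) : List Y → K := fun w =>
  ((cuts w).map fun parts =>
    algebraMap ℚ K ((-1) ^ (parts.length - 1) / (parts.length : ℚ)) *
      pairPS S (prodM m (parts.map word))).sum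

/-- Logarithm of a series `S` with `⟨S,1⟩ = 1`. -/
def logS (S : List Y → K) : List Y → K := fun w =>
  ∑ n ∈ Finset.Icc 1 w.length,
    algebraMap ℚ K ((-1) ^ (n - 1) / (n : ℚ)) * powS (fun t => S t - oneS t) n w

/-- Convolution of endomorphisms (valued in series), using a dual coproduct witness. -/
def convT (Δfn : List Y → (List Y × List Y →₀ K))
    (f g : (List Y →₀ K) → (List Y → K)) : (List Y →₀ K) → (List Y → K) :=
  fun P w => P.sum fun t a =>
    a * (Δfn t).sum fun p c => c * mulS (f (word p.1)) (g (word p.2)) w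

/-- The convolution unit `e = 1 ∘ ε`. -/
def eT : (List Y →₀ K) → (List Y → K) := fun P w => if w = [] then P [] else 0

/-- Convolution powers `π₁^{⋆ n}` of the Eulerian projector. -/
def convPowPi (m : (List Y →₀ K) →ₗ[K] (List Y →₀ K) →ₗ[K] (List Y →₀ K))
    (Δfn : List Y → (List Y × List Y →₀ K)) : ℕ → ((List Y →₀ K) → (List Y → K))
  | 0 => eT
  | n + 1 => convT Δfn (fun P => piOneS m fun t => P t) (convPowPi m Δfn n)

/-- Lyndon words: nonempty and lexicographically smaller than each proper suffix. -/
def IsLyndon [LinearOrder Y] (w : List Y) : Prop :=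
  w ≠ [] ∧ ∀ u v : List Y, u ≠ [] → v ≠ [] → w = u ++ v → List.Lex (· < ·) w v

/-- Strictly decreasing lists of Lyndon words with positive exponents,
indexing monomials in Lyndon words. -/
abbrev DecLyn (Y : Type*) [LinearOrder Y] :=
  {s : List (List Y × ℕ) // (∀ p ∈ s, IsLyndon p.1 ∧ 0 < p.2) ∧
    s.Chain' fun a b => List.Lex (· < ·) b.1 a.1}

/-- `⧢_φ`-monomial `l₁^{⧢ i₁} ⧢ ⋯ ⧢ l_k^{⧢ i_k}`. -/
def shMonomial (m : (List Y →₀ K) →ₗ[K] (List Y →₀ K) →ₗ[K] (List Y →₀ K))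
    (s : List (List Y × ℕ)) : List Y →₀ K :=
  s.foldr (fun p acc => m (mpow m (word p.1) p.2) acc) (word [])

/-- Concatenation monomial `Π_{l₁}^{i₁} ⋯ Π_{l_k}^{i_k}` in a family `Pi`. -/
def concMonomial (Pi : List Y → (List Y →₀ K)) (s : List (List Y × ℕ)) : List Y →₀ K :=
  s.foldr (fun p acc => concP (concPow (Pi p.1) p.2) acc) (word [])

/-- The singleton index `l¹ ∈ DecLyn Y` attached to a Lyndon word. -/
def singleIdx [LinearOrder Y] (l : List Y) (hl : IsLyndon l) : DecLyn Y :=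
  ⟨[(l, 1)], ⟨fun p hp => by
      rw [List.mem_singleton] at hp; subst hp; exact ⟨hl, Nat.one_pos⟩,
    List.isChain_singleton _⟩⟩

/-- `(s, r)` is the standard factorization of the Lyndon word `l`:
`l = sr` with `s, r` nonempty and `r` the lexicographically least proper suffix. -/
def StdFact [LinearOrder Y] (l s r : List Y) : Prop :=
  l = s ++ r ∧ s ≠ [] ∧ r ≠ [] ∧
  ∀ s' r' : List Y, l = s' ++ r' → s' ≠ [] → r' ≠ [] → r = r' ∨ List.Lex (· < ·) r r'

/-- `Pi` is the family defined by `Π_y = π₁(y)` on letters and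
`Π_l = [Π_s, Π_r]` for the standard factorization `(s,r)` of a Lyndon word `l`. -/
def IsPiFamily [LinearOrder Y]
    (m : (List Y →₀ K) →ₗ[K] (List Y →₀ K) →ₗ[K] (List Y →₀ K))
    (Pi : List Y → (List Y →₀ K)) : Prop :=
  (∀ y : Y, ∀ w : List Y, Pi [y] w = piOneS m (fun t => (word [y] : List Y →₀ K) t) w) ∧
  ∀ l s r : List Y, IsLyndon l → StdFact l s r →
    Pi l = concP (Pi s) (Pi r) - concP (Pi r) (Pi s)

/-!
Write `ρP` for left concatenation of a polynomial `P` by a linear combination `ρ` of letters.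
By bilinearity the defining recursion holds for all `ρ, σ, P, Q`:
`(ρP) ⧢ (σQ) = ρ(P ⧢ σQ) + σ(ρP ⧢ Q) + φ(ρ,σ)(P ⧢ Q)`.
Expanding `(au ⧢ bv) ⧢ cw` and `au ⧢ (bv ⧢ cw)` with it, the terms match pairwise by induction,
except `φ(φ(a,b),c)(…)` against `φ(a,φ(b,c))(…)`, which is where associativity of `φ` enters;
commutativity is the same argument with two words.
Conversely, since the constant term of `P ⧢ Q` is `⟨P,1⟩⟨Q,1⟩`, the coefficient of a letter `z`
in `(ρP) ⧢ (σQ)` is `φ(ρ,σ)_z ⟨P,1⟩⟨Q,1⟩`; so the letter parts of `a ⧢ b` and `(a ⧢ b) ⧢ c`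
are `φ(a,b)` and `φ(φ(a,b),c)`.
-/

section

omit [Algebra ℚ K] [DecidableEq Y]

def phiLin (φ : Y → Y → (Y →₀ K)) : (Y →₀ K) →ₗ[K] (Y →₀ K) →ₗ[K] (Y →₀ K) :=
  Finsupp.linearCombination K fun a => Finsupp.linearCombination K (φ a)

theorem phiLin_single_single (φ : Y → Y → (Y →₀ K)) (a b : Y) :
    phiLin φ (Finsupp.single a 1) (Finsupp.single b 1) = φ a b := by
  simp [phiLin]

theorem phiExt_eq_phiLin (φ : Y → Y → (Y →₀ K)) (p q : Y →₀ K) : phiExt φ p q = phiLin φ p q := by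
  simp [phiExt, phiLin, Finsupp.linearCombination_apply, LinearMap.finsupp_sum_apply,
    Finsupp.smul_sum, smul_smul]

theorem phiLin_assoc {φ : Y → Y → (Y →₀ K)} (hφ : PhiAssoc φ) (ρ σ τ : Y →₀ K) :
    phiLin φ (phiLin φ ρ σ) τ = phiLin φ ρ (phiLin φ σ τ) := by
  have h : (phiLin φ).compr₂ (phiLin φ) =
      ((LinearMap.llcomp K _ _ _).comp (phiLin φ)).compl₂ (phiLin φ) := by
    ext a b c : 6
    simpa [phiExt_eq_phiLin, phiLin_single_single] using hφ a b c
  exact congr($h ρ σ τ)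

def consVec : (Y →₀ K) →ₗ[K] Module.End K (List Y →₀ K) :=
  Finsupp.linearCombination K consL

theorem consVec_apply (ρ : Y →₀ K) (P : List Y →₀ K) :
    consVec ρ P = ρ.sum fun c k => k • consL c P := by
  simp [consVec, Finsupp.linearCombination_apply, LinearMap.finsupp_sum_apply]

theorem consVec_single (a : Y) :
    (consVec (Finsupp.single a 1) : Module.End K (List Y →₀ K)) = consL a := by
  simp [consVec]

theorem consL_apply_nil (a : Y) (P : List Y →₀ K) : consL a P [] = 0 := by
  simp [consL, Finsupp.lmapDomain_apply, Finsupp.mapDomain_of_notMem_range]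

theorem consL_apply_cons_self (a : Y) (P : List Y →₀ K) (w : List Y) :
    consL a P (a :: w) = P w :=
  Finsupp.mapDomain_apply List.cons_injective P w

theorem consL_apply_cons_of_ne {a b : Y} (h : a ≠ b) (P : List Y →₀ K) (w : List Y) :
    consL a P (b :: w) = 0 :=
  Finsupp.mapDomain_of_notMem_range _ _ (by simpa using h)

theorem consVec_apply_nil (ρ : Y →₀ K) (P : List Y →₀ K) : consVec ρ P [] = 0 := by
  simp [consVec_apply, consL_apply_nil]

theorem consVec_apply_singleton (ρ : Y →₀ K) (P : List Y →₀ K) (z : Y) :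
    consVec ρ P [z] = ρ z * P [] := by
  induction ρ using Finsupp.induction_linear with
  | zero => simp
  | add ρ ρ' hρ hρ' =>
    simp only [map_add, LinearMap.add_apply, Finsupp.add_apply, hρ, hρ', add_mul]
  | single a k =>
    rw [consVec, Finsupp.linearCombination_single, LinearMap.smul_apply, Finsupp.smul_apply,
      smul_eq_mul]
    by_cases h : a = z
    · subst h
      rw [consL_apply_cons_self, Finsupp.single_eq_same]
    · rw [consL_apply_cons_of_ne h, Finsupp.single_eq_of_ne' h, mul_zero, zero_mul]

theorem word_cons (a : Y) (u : List Y) : (word (a :: u) : List Y →₀ K) = consL a (word u) := by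
  simp [consL, word]

theorem word_apply_self (u : List Y) : (word u : List Y →₀ K) u = 1 :=
  Finsupp.single_eq_same

theorem single_eq_smul_word (u : List Y) (k : K) :
    (Finsupp.single u k : List Y →₀ K) = k • word u := by
  simp [word]

namespace IsPhiShuffle

variable {φ : Y → Y → (Y →₀ K)} {m : (List Y →₀ K) →ₗ[K] (List Y →₀ K) →ₗ[K] (List Y →₀ K)}

theorem consL_mul_consL (hm : IsPhiShuffle φ m) (a b : Y) (P Q : List Y →₀ K) :
    m (consL a P) (consL b Q) =
      consL a (m P (consL b Q)) + consL b (m (consL a P) Q) + consVec (φ a b) (m P Q) := by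
  induction P using Finsupp.induction_linear with
  | zero => simp
  | add P P' hP hP' => simp only [map_add, LinearMap.add_apply, hP, hP']; abel
  | single u k =>
    induction Q using Finsupp.induction_linear with
    | zero => simp
    | add Q Q' hQ hQ' => simp only [map_add, hQ, hQ']; abel
    | single v l =>
      simp only [single_eq_smul_word, map_smul, LinearMap.smul_apply, ← word_cons, hm.2.2,
        consVec_apply, smul_add]

theorem consVec_mul_consVec (hm : IsPhiShuffle φ m) (ρ σ : Y →₀ K) (P Q : List Y →₀ K) :
    m (consVec ρ P) (consVec σ Q) =
      consVec ρ (m P (consVec σ Q)) + consVec σ (m (consVec ρ P) Q) +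
      consVec (phiLin φ ρ σ) (m P Q) := by
  induction ρ using Finsupp.induction_linear with
  | zero => simp
  | add ρ ρ' hρ hρ' => simp only [map_add, LinearMap.add_apply, hρ, hρ']; abel
  | single a k =>
    induction σ using Finsupp.induction_linear with
    | zero => simp
    | add σ σ' hσ hσ' => simp only [map_add, LinearMap.add_apply, hσ, hσ']; abel
    | single b l =>
      rw [← Finsupp.smul_single_one a k, ← Finsupp.smul_single_one b l]
      simp only [map_smul, LinearMap.smul_apply, consVec_single, phiLin_single_single,
        hm.consL_mul_consL, smul_add]
      rw [smul_comm k l]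

theorem word_nil_mul (hm : IsPhiShuffle φ m) (P : List Y →₀ K) : m (word []) P = P := by
  induction P using Finsupp.induction_linear with
  | zero => simp
  | add P P' hP hP' => simp only [map_add, hP, hP']
  | single u k => rw [single_eq_smul_word, map_smul, hm.1]

theorem mul_word_nil (hm : IsPhiShuffle φ m) (P : List Y →₀ K) : m P (word []) = P := by
  induction P using Finsupp.induction_linear with
  | zero => simp
  | add P P' hP hP' => simp only [map_add, LinearMap.add_apply, hP, hP']
  | single u k => rw [single_eq_smul_word, map_smul, LinearMap.smul_apply, hm.2.1]

theorem word_mul_word_apply_nil (hm : IsPhiShuffle φ m) (u v : List Y) :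
    m (word u) (word v) [] = word u [] * word v [] := by
  rcases u with _ | ⟨a, u⟩
  · rw [hm.1, word_apply_self, one_mul]
  rcases v with _ | ⟨b, v⟩
  · rw [hm.2.1, word_apply_self, mul_one]
  simp only [word_cons, hm.consL_mul_consL, Finsupp.add_apply, consL_apply_nil,
    consVec_apply_nil, zero_mul, add_zero]

theorem mul_apply_nil (hm : IsPhiShuffle φ m) (P Q : List Y →₀ K) : m P Q [] = P [] * Q [] := by
  induction P using Finsupp.induction_linear with
  | zero => simp
  | add P P' hP hP' =>
    simp only [map_add, LinearMap.add_apply, Finsupp.add_apply, hP, hP', add_mul]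
  | single u k =>
    induction Q using Finsupp.induction_linear with
    | zero => simp
    | add Q Q' hQ hQ' => simp only [map_add, Finsupp.add_apply, hQ, hQ', mul_add]
    | single v l =>
      simp only [single_eq_smul_word, map_smul, LinearMap.smul_apply, Finsupp.smul_apply,
        smul_eq_mul, hm.word_mul_word_apply_nil]
      ring

theorem consVec_mul_consVec_apply_singleton (hm : IsPhiShuffle φ m) (ρ σ : Y →₀ K)
    (P Q : List Y →₀ K) (z : Y) :
    m (consVec ρ P) (consVec σ Q) [z] = phiLin φ ρ σ z * (P [] * Q []) := by
  simp only [hm.consVec_mul_consVec, Finsupp.add_apply, consVec_apply_singleton, hm.mul_apply_nil,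
    consVec_apply_nil, mul_zero, zero_mul, zero_add]

theorem phiComm_of_comm (hm : IsPhiShuffle φ m) (h : ∀ p q : List Y →₀ K, m p q = m q p) :
    PhiComm φ := by
  intro a b
  ext z
  have hz := congr($(h (word [a]) (word [b])) [z])
  simpa only [word_cons, ← consVec_single, hm.consVec_mul_consVec_apply_singleton,
    phiLin_single_single, word_apply_self, mul_one] using hz

theorem phiAssoc_of_assoc (hm : IsPhiShuffle φ m)
    (h : ∀ p q r : List Y →₀ K, m (m p q) r = m p (m q r)) : PhiAssoc φ := by
  intro a b c
  rw [phiExt_eq_phiLin, phiExt_eq_phiLin, ← phiLin_single_single φ a b,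
    ← phiLin_single_single φ b c]
  ext z
  have hz := congr($(h (word [a]) (word [b]) (word [c])) [z])
  simpa only [word_cons, ← consVec_single, hm.consVec_mul_consVec, map_add, LinearMap.add_apply,
    Finsupp.add_apply, consVec_apply_singleton, hm.mul_apply_nil, consVec_apply_nil,
    word_apply_self, mul_one, mul_zero, zero_mul, zero_add, add_zero] using hz

theorem word_mul_word_comm (hm : IsPhiShuffle φ m) (hφ : PhiComm φ) (u v : List Y) :
    m (word u) (word v) = m (word v) (word u) := by
  induction u generalizing v with
  | nil => rw [hm.1, hm.2.1]
  | cons a u ihu =>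
    induction v with
    | nil => rw [hm.1, hm.2.1]
    | cons b v ihv =>
      rw [word_cons, word_cons, hm.consL_mul_consL, hm.consL_mul_consL, ← word_cons, ← word_cons,
        ihu, ihv, ihu, hφ a b]
      abel

theorem word_mul_assoc (hm : IsPhiShuffle φ m) (hφ : PhiAssoc φ) (u v w : List Y) :
    m (m (word u) (word v)) (word w) = m (word u) (m (word v) (word w)) := by
  induction u generalizing v w with
  | nil => simp only [hm.word_nil_mul]
  | cons a u ihu =>
    induction v generalizing w with
    | nil => simp only [hm.mul_word_nil, hm.word_nil_mul]
    | cons b v ihv =>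
      induction w with
      | nil => simp only [hm.mul_word_nil]
      | cons c w ihw =>
        -- every triple met in the expansion is shorter in `u`, or in `v` with `a :: u` first,
        -- or in `w` with `a :: u`, `b :: v` first: hence the nested inductions
        have h_u_bv_cw := ihu (b :: v) (c :: w)
        have h_u_bv_w := ihu (b :: v) w
        have h_u_v_cw := ihu v (c :: w)
        have h_u_v_w := ihu v w
        have h_au_v_cw := ihv (c :: w)
        have h_au_v_w := ihv w
        simp only [word_cons, ← consVec_single] at *
        simp only [hm.consVec_mul_consVec, map_add, LinearMap.add_apply, h_u_bv_cw, h_u_bv_w,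
          h_u_v_cw, h_u_v_w, h_au_v_cw, h_au_v_w, ← ihw, phiLin_assoc hφ]
        abel

theorem assoc (hm : IsPhiShuffle φ m) (hφ : PhiAssoc φ) (p q r : List Y →₀ K) :
    m (m p q) r = m p (m q r) := by
  have h : m.compr₂ m = ((LinearMap.llcomp K _ _ _).comp m).compl₂ m := by
    ext u v w : 6
    simpa [word] using hm.word_mul_assoc hφ u v w
  exact congr($h p q r)

theorem comm (hm : IsPhiShuffle φ m) (hφ : PhiComm φ) (p q : List Y →₀ K) : m p q = m q p := by
  have h : m = m.flip := by
    ext u v : 4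
    simpa [word] using hm.word_mul_word_comm hφ u v
  exact congr($h p q)

end IsPhiShuffle

end

/-- the `φ`-shuffle is associative iff (the bilinear extension of)
`φ` is associative, and commutative iff `φ` is commutative. -/
theorem phiShuffle_assoc_comm_iff (φ : Y → Y → (Y →₀ K))
    (m : (List Y →₀ K) →ₗ[K] (List Y →₀ K) →ₗ[K] (List Y →₀ K))
    (hm : IsPhiShuffle φ m) :
    ((∀ p q r : List Y →₀ K, m (m p q) r = m p (m q r)) ↔ PhiAssoc φ) ∧
    ((∀ p q : List Y →₀ K, m p q = m q p) ↔ PhiComm φ) :=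
  ⟨⟨hm.phiAssoc_of_assoc, hm.assoc⟩, ⟨hm.phiComm_of_comm, hm.comm⟩⟩
end
end

section
/- For Lyndon words l_1,...,l_k and positive integers i_1,...,i_k, one has l_1^{⧢_φ i_1} ⧢_φ ⋯ ⧢_φ l_k^{⧢_φ i_k} = l_1^{⧢ i_1} ⧢ ⋯ ⧢ l_k^{⧢ i_k} + Σ_v c_v v, where ⧢ is the ordinary shuffle and the correction sum runs over words v of length strictly less than Σ_j i_j|l_j|. -/
noncomputable section

open Finsupp

variable {K : Type*} [CommRing K] [Algebra ℚ K]
variable {Y : Type*} [DecidableEq Y]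

/-! Filter `K⟨Y⟩` by word length. The recursion for `⧢_φ` differs from that of `⧢` only by the
term `φ(a,b) (u ⧢_φ v)`, and since `φ(a,b)` is a combination of letters this term is one letter
shorter than `au ⧢ bv`. Hence, by induction on words, both products respect the filtration and
`u ⧢_φ v - u ⧢ v` only involves words shorter than `|u| + |v|`; bilinearity propagates this from
words to powers and products of polynomials. -/

theorem Finsupp.map₂_supported_le {R α β N : Type*} [CommSemiring R] [AddCommMonoid N]
    [Module R N] (M : (α →₀ R) →ₗ[R] (β →₀ R) →ₗ[R] N) {s : Set α} {t : Set β}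
    {P : Submodule R N} (h : ∀ a ∈ s, ∀ b ∈ t, M (single a 1) (single b 1) ∈ P) :
    Submodule.map₂ M (supported R R s) (supported R R t) ≤ P := by
  rw [supported_eq_span_single, supported_eq_span_single, Submodule.map₂_span_span,
    Submodule.span_le]
  rintro _ ⟨_, ⟨a, ha, rfl⟩, _, ⟨b, hb, rfl⟩, rfl⟩
  exact h a ha b hb

theorem Finsupp.apply_sub_apply_mem_of_supported {R α β N : Type*} [CommRing R]
    [AddCommGroup N] [Module R N] (M M' : (α →₀ R) →ₗ[R] (β →₀ R) →ₗ[R] N) {s : Set α} {t : Set β}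
    {P : Submodule R N}
    (h : ∀ a ∈ s, ∀ b ∈ t, M (single a 1) (single b 1) - M' (single a 1) (single b 1) ∈ P)
    {p : α →₀ R} {q : β →₀ R} (hp : p ∈ supported R R s) (hq : q ∈ supported R R t) :
    M p q - M' p q ∈ P :=
  map₂_supported_le (M - M') h (Submodule.apply_mem_map₂ _ hp hq)

section LengthFiltration

omit [Algebra ℚ K] [DecidableEq Y]

variable {φ : Y → Y → (Y →₀ K)}
  {m msh : (List Y →₀ K) →ₗ[K] (List Y →₀ K) →ₗ[K] (List Y →₀ K)}

abbrev lengthLE (n : ℕ) : Submodule K (List Y →₀ K) :=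
  supported K K {w : List Y | w.length ≤ n}

abbrev lengthLT (n : ℕ) : Submodule K (List Y →₀ K) :=
  supported K K {w : List Y | w.length < n}

theorem lengthLE_mono {n k : ℕ} (h : n ≤ k) :
    lengthLE n ≤ (lengthLE k : Submodule K (List Y →₀ K)) :=
  supported_mono fun _ hw => le_trans hw h

theorem lengthLT_mono {n k : ℕ} (h : n ≤ k) :
    lengthLT n ≤ (lengthLT k : Submodule K (List Y →₀ K)) :=
  supported_mono fun _ hw => lt_of_lt_of_le hw h

theorem lengthLE_le_lengthLT {n k : ℕ} (h : n < k) :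
    lengthLE n ≤ (lengthLT k : Submodule K (List Y →₀ K)) :=
  supported_mono fun _ hw => lt_of_le_of_lt hw h

theorem word_mem_lengthLE {w : List Y} {n : ℕ} (h : w.length ≤ n) :
    (word w : List Y →₀ K) ∈ lengthLE n :=
  single_mem_supported K 1 h

theorem consL_mem_supported {a : Y} {p : List Y →₀ K} {s t : Set (List Y)}
    (hp : p ∈ supported K K s) (hst : ∀ w ∈ s, a :: w ∈ t) : consL a p ∈ supported K K t :=
  supported_comap_lmapDomain K K (List.cons a) t (supported_mono hst hp)

theorem consL_mem_lengthLE (a : Y) {p : List Y →₀ K} {n k : ℕ} (hp : p ∈ lengthLE n)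
    (h : n + 1 ≤ k) : consL a p ∈ lengthLE k :=
  consL_mem_supported hp fun _ hw => le_trans (Nat.succ_le_succ hw) h

theorem consL_mem_lengthLT (a : Y) {p : List Y →₀ K} {n k : ℕ} (hp : p ∈ lengthLT n)
    (h : n + 1 ≤ k) : consL a p ∈ lengthLT k :=
  consL_mem_supported hp fun _ hw => lt_of_lt_of_le (Nat.succ_lt_succ hw) h

theorem IsPhiShuffle.apply_word_mem_lengthLE (hm : IsPhiShuffle φ m) (u v : List Y) :
    m (word u) (word v) ∈ lengthLE (u.length + v.length) := by
  induction u generalizing v with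
  | nil => rw [hm.1]; exact word_mem_lengthLE (by simp)
  | cons a u ihu =>
    induction v with
    | nil => rw [hm.2.1]; exact word_mem_lengthLE (by simp)
    | cons b v ihv =>
      rw [hm.2.2]
      refine add_mem (add_mem ?_ ?_) (Submodule.finsuppSum_mem _ _ _ _ fun c _ => ?_)
      · exact consL_mem_lengthLE a (ihu _) (by simp only [List.length_cons]; omega)
      · exact consL_mem_lengthLE b ihv (by simp only [List.length_cons]; omega)
      · exact Submodule.smul_mem _ _
          (consL_mem_lengthLE c (ihu v) (by simp only [List.length_cons]; omega))

theorem IsPhiShuffle.sub_apply_word_mem_lengthLT (hm : IsPhiShuffle φ m)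
    (hsh : IsPhiShuffle (fun _ _ => 0) msh) (u v : List Y) :
    m (word u) (word v) - msh (word u) (word v) ∈ lengthLT (u.length + v.length) := by
  induction u generalizing v with
  | nil => rw [hm.1, hsh.1, sub_self]; exact zero_mem _
  | cons a u ihu =>
    induction v with
    | nil => rw [hm.2.1, hsh.2.1, sub_self]; exact zero_mem _
    | cons b v ihv =>
      have hsplit : m (word (a :: u)) (word (b :: v)) - msh (word (a :: u)) (word (b :: v)) =
          consL a (m (word u) (word (b :: v)) - msh (word u) (word (b :: v))) +
          consL b (m (word (a :: u)) (word v) - msh (word (a :: u)) (word v)) +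
          (φ a b).sum fun c k => k • consL c (m (word u) (word v)) := by
        rw [hm.2.2, hsh.2.2, Finsupp.sum_zero_index, map_sub, map_sub]
        abel
      rw [hsplit]
      refine add_mem (add_mem ?_ ?_) (Submodule.finsuppSum_mem _ _ _ _ fun c _ => ?_)
      · exact consL_mem_lengthLT a (ihu _) (by simp only [List.length_cons]; omega)
      · exact consL_mem_lengthLT b ihv (by simp only [List.length_cons]; omega)
      · exact Submodule.smul_mem _ _ <| consL_mem_lengthLT c
          (lengthLE_le_lengthLT (Nat.lt_succ_self _) (hm.apply_word_mem_lengthLE u v))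
          (by simp only [List.length_cons]; omega)

theorem IsPhiShuffle.apply_mem_lengthLE (hm : IsPhiShuffle φ m) {p q : List Y →₀ K} {i j : ℕ}
    (hp : p ∈ lengthLE i) (hq : q ∈ lengthLE j) : m p q ∈ lengthLE (i + j) :=
  Finsupp.map₂_supported_le m (fun u hu v hv =>
    lengthLE_mono (add_le_add hu hv) (hm.apply_word_mem_lengthLE u v))
    (Submodule.apply_mem_map₂ m hp hq)

theorem IsPhiShuffle.apply_mem_lengthLT_of_left (hm : IsPhiShuffle φ m) {p q : List Y →₀ K}
    {i j : ℕ} (hp : p ∈ lengthLT i) (hq : q ∈ lengthLE j) : m p q ∈ lengthLT (i + j) :=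
  Finsupp.map₂_supported_le m (fun u hu v hv => lengthLE_le_lengthLT
    (add_lt_add_of_lt_of_le hu hv) (hm.apply_word_mem_lengthLE u v))
    (Submodule.apply_mem_map₂ m hp hq)

theorem IsPhiShuffle.apply_mem_lengthLT_of_right (hm : IsPhiShuffle φ m) {p q : List Y →₀ K}
    {i j : ℕ} (hp : p ∈ lengthLE i) (hq : q ∈ lengthLT j) : m p q ∈ lengthLT (i + j) :=
  Finsupp.map₂_supported_le m (fun u hu v hv => lengthLE_le_lengthLT
    (add_lt_add_of_le_of_lt hu hv) (hm.apply_word_mem_lengthLE u v))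
    (Submodule.apply_mem_map₂ m hp hq)

theorem IsPhiShuffle.sub_apply_mem_lengthLT (hm : IsPhiShuffle φ m)
    (hsh : IsPhiShuffle (fun _ _ => 0) msh) {p q : List Y →₀ K} {i j : ℕ}
    (hp : p ∈ lengthLE i) (hq : q ∈ lengthLE j) : m p q - msh p q ∈ lengthLT (i + j) :=
  Finsupp.apply_sub_apply_mem_of_supported m msh (fun u hu v hv =>
    lengthLT_mono (add_le_add hu hv) (hm.sub_apply_word_mem_lengthLT hsh u v)) hp hq

theorem IsPhiShuffle.apply_sub_apply_mem_lengthLT (hm : IsPhiShuffle φ m)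
    (hsh : IsPhiShuffle (fun _ _ => 0) msh) {p p' q q' : List Y →₀ K} {i j : ℕ}
    (hp : p ∈ lengthLE i) (hp' : p' ∈ lengthLE i) (hpp' : p - p' ∈ lengthLT i)
    (hq : q ∈ lengthLE j) (hqq' : q - q' ∈ lengthLT j) :
    m p q - msh p' q' ∈ lengthLT (i + j) := by
  have hsplit : m p q - msh p' q' = (m p q - msh p q) + msh (p - p') q + msh p' (q - q') := by
    simp only [map_sub, LinearMap.sub_apply]
    abel
  rw [hsplit]
  exact add_mem (add_mem (hm.sub_apply_mem_lengthLT hsh hp hq)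
    (hsh.apply_mem_lengthLT_of_left hpp' hq)) (hsh.apply_mem_lengthLT_of_right hp' hqq')

theorem IsPhiShuffle.mpow_word_mem_lengthLE (hm : IsPhiShuffle φ m) (l : List Y) :
    ∀ n, mpow m (word l) n ∈ lengthLE (n * l.length)
  | 0 => word_mem_lengthLE (Nat.zero_le _)
  | n + 1 => by
    rw [Nat.succ_mul, add_comm]
    exact hm.apply_mem_lengthLE (word_mem_lengthLE le_rfl) (hm.mpow_word_mem_lengthLE l n)

theorem IsPhiShuffle.mpow_word_sub_mem_lengthLT (hm : IsPhiShuffle φ m)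
    (hsh : IsPhiShuffle (fun _ _ => 0) msh) (l : List Y) :
    ∀ n, mpow m (word l) n - mpow msh (word l) n ∈ lengthLT (n * l.length)
  | 0 => by rw [mpow, mpow, sub_self]; exact zero_mem _
  | n + 1 => by
    rw [Nat.succ_mul, add_comm]
    have hl : (word l : List Y →₀ K) ∈ lengthLE l.length := word_mem_lengthLE le_rfl
    exact hm.apply_sub_apply_mem_lengthLT hsh hl hl (by rw [sub_self]; exact zero_mem _)
      (hm.mpow_word_mem_lengthLE l n) (hm.mpow_word_sub_mem_lengthLT hsh l n)

theorem IsPhiShuffle.shMonomial_mem_lengthLE (hm : IsPhiShuffle φ m) :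
    ∀ s : List (List Y × ℕ), shMonomial m s ∈ lengthLE (s.map fun p => p.2 * p.1.length).sum
  | [] => word_mem_lengthLE le_rfl
  | p :: s => by
    rw [List.map_cons, List.sum_cons]
    exact hm.apply_mem_lengthLE (hm.mpow_word_mem_lengthLE p.1 p.2) (hm.shMonomial_mem_lengthLE s)

theorem IsPhiShuffle.shMonomial_sub_mem_lengthLT (hm : IsPhiShuffle φ m)
    (hsh : IsPhiShuffle (fun _ _ => 0) msh) :
    ∀ s : List (List Y × ℕ),
      shMonomial m s - shMonomial msh s ∈ lengthLT (s.map fun p => p.2 * p.1.length).sum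
  | [] => by simp only [shMonomial, List.foldr_nil, sub_self, zero_mem]
  | p :: s => by
    rw [List.map_cons, List.sum_cons]
    exact hm.apply_sub_apply_mem_lengthLT hsh (hm.mpow_word_mem_lengthLE p.1 p.2)
      (hsh.mpow_word_mem_lengthLE p.1 p.2) (hm.mpow_word_sub_mem_lengthLT hsh p.1 p.2)
      (hm.shMonomial_mem_lengthLE s) (hm.shMonomial_sub_mem_lengthLT hsh s)

end LengthFiltration

theorem phiShuffle_monomial_triangular_general (φ : Y → Y → (Y →₀ K))
    (m msh : (List Y →₀ K) →ₗ[K] (List Y →₀ K) →ₗ[K] (List Y →₀ K))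
    (hm : IsPhiShuffle φ m) (hsh : IsPhiShuffle (fun _ _ => 0) msh)
    (s : List (List Y × ℕ)) :
    ∃ c : List Y →₀ K,
      shMonomial m s = shMonomial msh s + c ∧
      ∀ v ∈ c.support, v.length < (s.map fun p => p.2 * p.1.length).sum :=
  ⟨shMonomial m s - shMonomial msh s, (add_sub_cancel _ _).symm,
    fun _ hv => (mem_supported K _).1 (hm.shMonomial_sub_mem_lengthLT hsh s) hv⟩

/-- a `⧢_φ`-monomial in Lyndon words equals the corresponding
ordinary shuffle monomial plus a correction supported on words of strictly
smaller length. -/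
theorem phiShuffle_monomial_triangular [LinearOrder Y] (φ : Y → Y → (Y →₀ K))
    (m msh : (List Y →₀ K) →ₗ[K] (List Y →₀ K) →ₗ[K] (List Y →₀ K))
    (hm : IsPhiShuffle φ m) (hsh : IsPhiShuffle (fun _ _ => 0) msh)
    (hassoc : PhiAssoc φ)
    (s : List (List Y × ℕ)) (hs : ∀ p ∈ s, IsLyndon p.1 ∧ 0 < p.2) :
    ∃ c : List Y →₀ K,
      shMonomial m s = shMonomial msh s + c ∧
      ∀ v ∈ c.support, v.length < (s.map fun p => p.2 * p.1.length).sum :=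
  phiShuffle_monomial_triangular_general φ m msh hm hsh s

end
end
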